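/- arXiv:2311.03327 — 5 statements merged into one kernel-verified Lean document; each statement's English description precedes it below -/
import Mathlib

section
/- Let M be a positive integer, let r_1 ≥ r_2 ≥ … ≥ r_M ≥ 0 be real numbers, and let λ_1, …, λ_M ∈ [0,1] be real numbers with ∑_{b=1}^M λ_b ≤ 1. Then ∑_{b=1}^M r_b · λ_b · ∏_{j=1}^{b-1} (1 − λ_j) ≥ (1 − 1/e) · ∑_{b=1}^M r_b · λ_b. -/
open Finset

-- convexity bound: exp(-s) ≤ 1 - (1 - 1/e) s for s ∈ [0,1]
lemma aux_exp_bound {s : ℝ} (h0 : 0 ≤ s) (h1 : s ≤ 1) :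
    Real.exp (-s) ≤ 1 - (1 - 1 / Real.exp 1) * s := by
  have := convexOn_exp.2 (Set.mem_univ (0:ℝ)) (Set.mem_univ (-1:ℝ))
    (by linarith : (0:ℝ) ≤ 1 - s) h0 (by ring)
  simp only [smul_eq_mul, mul_zero, zero_add, mul_neg, mul_one, Real.exp_zero] at this
  simp only [Real.exp_neg] at this ⊢
  rw [one_div]
  nlinarith [this]

-- telescoping
lemma aux_telescope (L : ℕ → ℝ) (k : ℕ) :
    ∑ i ∈ range k, L i * ∏ j ∈ range i, (1 - L j) = 1 - ∏ j ∈ range k, (1 - L j) := by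
  induction k with
  | zero => simp
  | succ n ih => rw [Finset.sum_range_succ, Finset.prod_range_succ, ih]; ring

-- Abel-type lemma
lemma aux_abel (R c : ℕ → ℝ) (hmono : ∀ i j, i ≤ j → R j ≤ R i)
    (hnonneg : ∀ i, 0 ≤ R i) (hC : ∀ k, 0 ≤ ∑ i ∈ range k, c i) (n : ℕ) :
    R n * ∑ i ∈ range n, c i ≤ ∑ i ∈ range n, R i * c i := by
  induction n with
  | zero => simp
  | succ m ih =>
    rw [Finset.sum_range_succ, Finset.sum_range_succ]
    have hCa : 0 ≤ ∑ i ∈ range m, c i + c m := by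
      have := hC (m+1); rwa [Finset.sum_range_succ] at this
    have h1 : R (m+1) * (∑ i ∈ range m, c i + c m) ≤ R m * (∑ i ∈ range m, c i + c m) :=
      mul_le_mul_of_nonneg_right (hmono m (m+1) (Nat.le_succ m)) hCa
    calc R (m+1) * (∑ i ∈ range m, c i + c m)
        ≤ R m * (∑ i ∈ range m, c i + c m) := h1
      _ = R m * ∑ i ∈ range m, c i + R m * c m := by ring
      _ ≤ ∑ i ∈ range m, R i * c i + R m * c m := by linarith [ih]

theorem stmt_0 (M : ℕ) (hM : 0 < M) (r l : Fin M → ℝ)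
    (hr_mono : ∀ i j : Fin M, i ≤ j → r j ≤ r i)
    (hr_nonneg : ∀ b, 0 ≤ r b)
    (hl0 : ∀ b, 0 ≤ l b) (hl1 : ∀ b, l b ≤ 1)
    (hsum : ∑ b, l b ≤ 1) :
    (1 - 1 / Real.exp 1) * ∑ b, r b * l b ≤
      ∑ b, r b * l b * ∏ j ∈ Finset.Iio b, (1 - l j) := by
  set t : ℝ := 1 - 1 / Real.exp 1 with ht
  set R : ℕ → ℝ := fun n => if h : n < M then r ⟨n, h⟩ else 0 with hR
  set L : ℕ → ℝ := fun n => if h : n < M then l ⟨n, h⟩ else 0 with hL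
  have hL0 : ∀ n, 0 ≤ L n := by
    intro n; simp only [hL]; split
    · exact hl0 _
    · exact le_rfl
  have hL1 : ∀ n, L n ≤ 1 := by
    intro n; simp only [hL]; split
    · exact hl1 _
    · exact zero_le_one
  have hR0 : ∀ n, 0 ≤ R n := by
    intro n; simp only [hR]; split
    · exact hr_nonneg _
    · exact le_rfl
  have hRmono : ∀ i j, i ≤ j → R j ≤ R i := by
    intro i j hij
    simp only [hR]
    split
    · next hj =>
      have hi : i < M := lt_of_le_of_lt hij hj
      rw [dif_pos hi]
      exact hr_mono ⟨i, hi⟩ ⟨j, hj⟩ hij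
    · split; exacts [hr_nonneg _, le_refl _]
  -- sum bound
  have hsumM : ∑ i ∈ range M, L i ≤ 1 := by
    have : ∑ i ∈ range M, L i = ∑ b : Fin M, l b := by
      rw [← Fin.sum_univ_eq_sum_range]
      exact Finset.sum_congr rfl fun b _ => by simp [hL, b.isLt]
    linarith
  have hS : ∀ k, ∑ i ∈ range k, L i ≤ 1 := by
    intro k
    calc ∑ i ∈ range k, L i ≤ ∑ i ∈ range (max k M), L i :=
          Finset.sum_le_sum_of_subset_of_nonneg
            (Finset.range_subset_range.2 (le_max_left _ _)) (fun i _ _ => hL0 i)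
      _ = ∑ i ∈ range M, L i := by
          refine (Finset.sum_subset (Finset.range_subset_range.2 (le_max_right _ _)) ?_).symm
          intro i _ hi
          simp only [Finset.mem_range, not_lt] at hi
          simp [hL, Nat.not_lt.2 hi]
      _ ≤ 1 := hsumM
  have hSnn : ∀ k, 0 ≤ ∑ i ∈ range k, L i := fun k => Finset.sum_nonneg fun i _ => hL0 i
  -- product lower bound via exp
  have hprod : ∀ k, ∏ j ∈ range k, (1 - L j) ≤ Real.exp (-(∑ i ∈ range k, L i)) := by
    intro k
    calc ∏ j ∈ range k, (1 - L j) ≤ ∏ j ∈ range k, Real.exp (-(L j)) := by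
          refine Finset.prod_le_prod (fun j _ => by linarith [hL1 j]) (fun j _ => ?_)
          linarith [Real.add_one_le_exp (-(L j))]
      _ = Real.exp (-(∑ i ∈ range k, L i)) := by
          rw [← Real.exp_sum]; congr 1; rw [← Finset.sum_neg_distrib]
  -- partial sums nonneg
  have hC : ∀ k, 0 ≤ ∑ i ∈ range k, (L i * ∏ j ∈ range i, (1 - L j) - t * L i) := by
    intro k
    rw [Finset.sum_sub_distrib, aux_telescope, ← Finset.mul_sum]
    have h1 := hprod k
    have h2 := aux_exp_bound (hSnn k) (hS k)
    rw [ht]; linarith [h1, h2]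
  have key := aux_abel R (fun i => L i * ∏ j ∈ range i, (1 - L j) - t * L i) hRmono hR0 hC M
  have hRM : R M * ∑ i ∈ range M, _ ≥ 0 := mul_nonneg (hR0 M) (hC M)
  have key2 : 0 ≤ ∑ i ∈ range M, R i * (L i * ∏ j ∈ range i, (1 - L j) - t * L i) :=
    le_trans (mul_nonneg (hR0 M) (hC M)) key
  -- translate back
  have e1 : ∑ b : Fin M, r b * l b = ∑ i ∈ range M, R i * L i := by
    rw [← Fin.sum_univ_eq_sum_range]
    exact Finset.sum_congr rfl fun b _ => by simp [hR, hL, b.isLt]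
  have e2 : ∑ b : Fin M, r b * l b * ∏ j ∈ Finset.Iio b, (1 - l j)
      = ∑ i ∈ range M, R i * L i * ∏ j ∈ range i, (1 - L j) := by
    rw [← Fin.sum_univ_eq_sum_range]
    refine Finset.sum_congr rfl fun b _ => ?_
    have hp : ∏ j ∈ Finset.Iio b, (1 - l j) = ∏ j ∈ range (b : ℕ), (1 - L j) := by
      rw [← Nat.Iio_eq_range, ← Fin.map_valEmbedding_Iio, Finset.prod_map]
      exact Finset.prod_congr rfl fun j _ => by simp [hL, j.isLt]
    simp [hR, hL, b.isLt, hp]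
  rw [e1, e2]
  have expand : ∑ i ∈ range M, R i * (L i * ∏ j ∈ range i, (1 - L j) - t * L i)
      = ∑ i ∈ range M, R i * L i * ∏ j ∈ range i, (1 - L j) - t * ∑ i ∈ range M, R i * L i := by
    rw [Finset.mul_sum, ← Finset.sum_sub_distrib]
    exact Finset.sum_congr rfl fun i _ => by ring
  rw [expand] at key2
  linarith
end

section
/- Let (Ω, P) be a probability space, M a positive integer, λ_1, …, λ_M ∈ [0,1] real numbers with ∑_{b=1}^M λ_b ≤ 1, and r_1 ≥ r_2 ≥ … ≥ r_M ≥ 0 real numbers. Let B_1, …, B_M : Ω → {0,1} be independent random variables with P(B_b = 1) = λ_b for each b. Define the first-success reward R : Ω → ℝ by R(ω) = r_β where β = β(ω) is the least index b with B_b(ω) = 1, and R(ω) = 0 if B_b(ω) = 0 for all b. Then E[R] ≥ (1 − 1/e) · ∑_{b=1}^M r_b · λ_b. -/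
/-!
Let `A b` be the event that `b` is the first index with `B b = true`. Then `R = ∑ b, r b • 𝟙_{A b}`
and independence gives `P (A b) = l b * ∏_{i < b} (1 - l i)`. These probabilities telescope along
prefixes: `∑_{i ≤ k} P (A i) = 1 - ∏_{i ≤ k} (1 - l i) ≥ 1 - exp (-∑_{i ≤ k} l i)`, which is at
least `(1 - 1/e) ∑_{i ≤ k} l i` by concavity of `1 - exp (-t)` on `[0, 1]`. As `r` is antitone
and nonnegative, Abel summation turns this domination of prefix sums into the `r`-weighted bound.
-/

open MeasureTheory ProbabilityTheory Finset

/-- Abel summation: peel off the largest index `a` and split `f = f a + (f - f a)`. -/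
theorem Finset.sum_mul_le_sum_mul_of_prefix_sum_le {ι R : Type*} [LinearOrder ι] [CommRing R]
    [LinearOrder R] [IsStrictOrderedRing R] {s : Finset ι} {f x y : ι → R}
    (hf : AntitoneOn f s) (hf0 : ∀ i ∈ s, 0 ≤ f i)
    (hxy : ∀ k ∈ s, ∑ i ∈ s with i ≤ k, y i ≤ ∑ i ∈ s with i ≤ k, x i) :
    ∑ i ∈ s, f i * y i ≤ ∑ i ∈ s, f i * x i := by
  induction s using Finset.induction_on_max generalizing f with
  | empty => simp
  | insert a s ha ih =>
    have has : a ∉ s := fun h => lt_irrefl a (ha a h)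
    have hsplit (z : ι → R) : ∑ i ∈ insert a s, f i * z i =
        f a * ∑ i ∈ insert a s, z i + ∑ i ∈ s, (f i - f a) * z i := by
      simp only [sum_insert has, mul_add, mul_sum, sub_mul, sum_sub_distrib]
      ring
    have htotal : ∑ i ∈ insert a s, y i ≤ ∑ i ∈ insert a s, x i := by
      simpa [filter_true_of_mem fun i hi => (mem_insert.1 hi).elim le_of_eq (fun h => (ha i h).le)]
        using hxy a (mem_insert_self a s)
    have hrest : ∑ i ∈ s, (f i - f a) * y i ≤ ∑ i ∈ s, (f i - f a) * x i := by
      refine ih (fun i hi j hj hij => ?_) (fun i hi => ?_) (fun k hk => ?_)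
      · simpa using hf (mem_insert_of_mem hi) (mem_insert_of_mem hj) hij
      · exact sub_nonneg.2 (hf (mem_insert_of_mem hi) (mem_insert_self a s) (ha i hi).le)
      · simpa [filter_insert, (ha k hk).not_ge] using hxy k (mem_insert_of_mem hk)
    rw [hsplit x, hsplit y]
    exact add_le_add (mul_le_mul_of_nonneg_left htotal (hf0 a (mem_insert_self a s))) hrest

theorem Finset.prod_one_sub_le_exp_neg_sum {ι : Type*} (s : Finset ι) {x : ι → ℝ}
    (hx : ∀ i ∈ s, x i ≤ 1) : ∏ i ∈ s, (1 - x i) ≤ Real.exp (-∑ i ∈ s, x i) := by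
  rw [← sum_neg_distrib, Real.exp_sum]
  exact prod_le_prod (fun i hi => sub_nonneg.2 (hx i hi)) fun i _ => Real.one_sub_le_exp_neg _

/-- The chord of the concave function `1 - exp (-t)` over `[0, 1]`. -/
theorem Real.mul_le_one_sub_exp_neg {t : ℝ} (h0 : 0 ≤ t) (h1 : t ≤ 1) :
    (1 - 1 / exp 1) * t ≤ 1 - exp (-t) := by
  have := convexOn_exp.2 (Set.mem_univ (-1)) (Set.mem_univ 0) h0 (sub_nonneg.2 h1) (by ring)
  simp only [smul_eq_mul, mul_neg, mul_one, mul_zero, add_zero, exp_zero, exp_neg] at this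
  rw [one_div, exp_neg]
  linarith

theorem Finset.mul_sum_le_sum_mul_prod_one_sub {ι : Type*} [LinearOrder ι] (s : Finset ι)
    {l : ι → ℝ} (hl0 : ∀ i ∈ s, 0 ≤ l i) (hs : ∑ i ∈ s, l i ≤ 1) :
    (1 - 1 / Real.exp 1) * ∑ i ∈ s, l i ≤ ∑ i ∈ s, l i * ∏ j ∈ s with j < i, (1 - l j) :=
  calc (1 - 1 / Real.exp 1) * ∑ i ∈ s, l i
      ≤ 1 - Real.exp (-∑ i ∈ s, l i) := Real.mul_le_one_sub_exp_neg (sum_nonneg hl0) hs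
    _ ≤ 1 - ∏ i ∈ s, (1 - l i) :=
      have hl1 : ∀ i ∈ s, l i ≤ 1 := fun i hi => (single_le_sum hl0 hi).trans hs
      sub_le_sub_left (s.prod_one_sub_le_exp_neg_sum hl1) 1
    _ = ∑ i ∈ s, l i * ∏ j ∈ s with j < i, (1 - l j) := by
      rw [prod_one_sub_ordered, sub_sub_cancel]

section FirstSuccess

variable {ι : Type*} [Fintype ι] [LinearOrder ι]

def firstSuccessProb (l : ι → ℝ) (b : ι) : ℝ := l b * ∏ i with i < b, (1 - l i)

theorem mul_sum_le_sum_mul_firstSuccessProb {l r : ι → ℝ} (hl0 : ∀ b, 0 ≤ l b)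
    (hsum : ∑ b, l b ≤ 1) (hr : Antitone r) (hr0 : ∀ b, 0 ≤ r b) :
    (1 - 1 / Real.exp 1) * ∑ b, r b * l b ≤ ∑ b, r b * firstSuccessProb l b := by
  have hprefix (k : ι) : ∑ i with i ≤ k, (1 - 1 / Real.exp 1) * l i ≤
      ∑ i with i ≤ k, firstSuccessProb l i := by
    rw [← mul_sum]
    refine ((univ.filter (· ≤ k)).mul_sum_le_sum_mul_prod_one_sub (fun i _ => hl0 i)
      ((sum_le_sum_of_subset_of_nonneg (subset_univ _) fun i _ _ => hl0 i).trans hsum)).trans_eq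
      (sum_congr rfl fun i hi => ?_)
    rw [firstSuccessProb, filter_filter]
    congr 2
    exact filter_congr fun j _ =>
      and_iff_right_of_imp fun hji => (hji.trans_le (mem_filter.1 hi).2).le
  calc (1 - 1 / Real.exp 1) * ∑ b, r b * l b = ∑ b, r b * ((1 - 1 / Real.exp 1) * l b) := by
        rw [mul_sum]; exact sum_congr rfl fun b _ => by ring
    _ ≤ ∑ b, r b * firstSuccessProb l b :=
        sum_mul_le_sum_mul_of_prefix_sum_le (hr.antitoneOn _) (fun b _ => hr0 b)
          fun k _ => hprefix k

variable {Ω : Type*} {B : ι → Ω → Bool}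

def firstSuccess (B : ι → Ω → Bool) (b : ι) : Set Ω :=
  {ω | B b ω = true ∧ ∀ i < b, B i ω = false}

theorem firstSuccess_eq_biInter (b : ι) :
    firstSuccess B b = ⋂ i ∈ univ.filter (· ≤ b), B i ⁻¹' {decide (i = b)} := by
  ext ω
  simp only [firstSuccess, Set.mem_iInter, mem_filter, mem_univ, true_and,
    Set.mem_preimage, Set.mem_singleton_iff]
  refine ⟨fun ⟨hb, hlt⟩ i hi => ?_, fun h => ⟨by simpa using h b le_rfl, fun i hi => ?_⟩⟩
  · rcases hi.lt_or_eq with hi | rfl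
    · simp [hlt i hi, hi.ne]
    · simp [hb]
  · simpa [hi.ne] using h i hi.le

theorem mem_firstSuccess_iff_min'_eq {ω : Ω} (h : (univ.filter fun b => B b ω = true).Nonempty)
    (b : ι) : ω ∈ firstSuccess B b ↔ (univ.filter fun b => B b ω = true).min' h = b := by
  rw [min'_eq_iff]
  simp only [firstSuccess, Set.mem_ofPred_eq, mem_filter, mem_univ, true_and,
    and_congr_right_iff]
  exact fun _ => forall_congr' fun i => by cases B i ω <;> simp

theorem sum_indicator_firstSuccess (r : ι → ℝ) (ω : Ω) :
    ∑ b, (firstSuccess B b).indicator (fun _ => r b) ω =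
      if h : (univ.filter fun b => B b ω = true).Nonempty then
        r ((univ.filter fun b => B b ω = true).min' h)
      else 0 := by
  split_ifs with h
  · rw [sum_eq_single_of_mem _ (mem_univ _) fun b _ hb => ?_]
    · exact Set.indicator_of_mem ((mem_firstSuccess_iff_min'_eq h _).2 rfl) _
    · exact Set.indicator_of_notMem
        (fun hω => hb ((mem_firstSuccess_iff_min'_eq h b).1 hω).symm) _
  · refine sum_eq_zero fun b _ => Set.indicator_of_notMem (fun hω => h ⟨b, ?_⟩) _
    simpa using hω.1

variable [MeasurableSpace Ω]

theorem measurableSet_firstSuccess (hB : ∀ b, Measurable (B b)) (b : ι) :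
    MeasurableSet (firstSuccess B b) := by
  rw [firstSuccess_eq_biInter]
  exact Finset.measurableSet_biInter _ fun i _ => hB i (measurableSet_singleton _)

theorem measureReal_firstSuccess {P : Measure Ω} [IsProbabilityMeasure P]
    (hB : ∀ b, Measurable (B b)) (hind : iIndepFun B P) {l : ι → ℝ} (hl0 : ∀ b, 0 ≤ l b)
    (hlaw : ∀ b, P {ω | B b ω = true} = ENNReal.ofReal (l b)) (b : ι) :
    P.real (firstSuccess B b) = firstSuccessProb l b := by
  have htrue (i : ι) : P.real (B i ⁻¹' {true}) = l i := by
    rw [measureReal_def, ← ENNReal.toReal_ofReal (hl0 i), ← hlaw i]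
    rfl
  have hfalse (i : ι) : P.real (B i ⁻¹' {false}) = 1 - l i := by
    rw [← htrue i, ← probReal_compl_eq_one_sub (hB i (measurableSet_singleton _)),
      ← Set.preimage_compl]
    congr 2
    ext x
    simp
  rw [firstSuccess_eq_biInter, measureReal_def,
    hind.measure_inter_preimage_eq_mul _ fun _ _ => measurableSet_singleton _,
    ENNReal.toReal_prod]
  have hIic : univ.filter (· ≤ b) = insert b (univ.filter (· < b)) := by
    ext i
    simp [le_iff_lt_or_eq, or_comm]
  simp only [← measureReal_def]
  rw [hIic, prod_insert (by simp), decide_eq_true rfl, htrue, firstSuccessProb]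
  congr 1
  exact prod_congr rfl fun i hi => by rw [decide_eq_false (mem_filter.1 hi).2.ne, hfalse]

theorem integral_sum_indicator_firstSuccess {P : Measure Ω} [IsFiniteMeasure P]
    (hB : ∀ b, Measurable (B b)) (r : ι → ℝ) :
    ∫ ω, ∑ b, (firstSuccess B b).indicator (fun _ => r b) ω ∂P =
      ∑ b, r b * P.real (firstSuccess B b) := by
  rw [integral_finsetSum _ fun b _ =>
    (integrable_const (r b)).indicator (measurableSet_firstSuccess hB b)]
  refine sum_congr rfl fun b _ => ?_
  rw [integral_indicator_const _ (measurableSet_firstSuccess hB b), smul_eq_mul, mul_comm]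

end FirstSuccess

theorem stmt_3_general {Ω : Type*} [MeasurableSpace Ω] (P : Measure Ω) [IsProbabilityMeasure P]
    (M : ℕ) (l r : Fin M → ℝ)
    (hl0 : ∀ b, 0 ≤ l b)
    (hsum : ∑ b, l b ≤ 1)
    (hr_mono : ∀ i j : Fin M, i ≤ j → r j ≤ r i)
    (hr_nonneg : ∀ b, 0 ≤ r b)
    (B : Fin M → Ω → Bool)
    (hBmeas : ∀ b, Measurable (B b))
    (hBindep : iIndepFun B P)
    (hBlaw : ∀ b, P {ω | B b ω = true} = ENNReal.ofReal (l b))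
    (R : Ω → ℝ)
    (hR : ∀ ω, R ω =
      if h : (Finset.univ.filter fun b => B b ω = true).Nonempty then
        r ((Finset.univ.filter fun b => B b ω = true).min' h)
      else 0) :
    (1 - 1 / Real.exp 1) * ∑ b, r b * l b ≤ ∫ ω, R ω ∂P := by
  have hR' : R = fun ω => ∑ b, (firstSuccess B b).indicator (fun _ => r b) ω :=
    funext fun ω => (hR ω).trans (sum_indicator_firstSuccess r ω).symm
  calc (1 - 1 / Real.exp 1) * ∑ b, r b * l b ≤ ∑ b, r b * firstSuccessProb l b :=
        mul_sum_le_sum_mul_firstSuccessProb hl0 hsum hr_mono hr_nonneg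
    _ = ∑ b, r b * P.real (firstSuccess B b) := by
        simp only [measureReal_firstSuccess hBmeas hBindep hl0 hBlaw]
    _ = ∫ ω, R ω ∂P := by rw [hR', integral_sum_indicator_firstSuccess hBmeas]

theorem stmt_3 {Ω : Type*} [MeasurableSpace Ω] (P : Measure Ω) [IsProbabilityMeasure P]
    (M : ℕ) (hM : 0 < M) (l r : Fin M → ℝ)
    (hl0 : ∀ b, 0 ≤ l b) (hl1 : ∀ b, l b ≤ 1)
    (hsum : ∑ b, l b ≤ 1)
    (hr_mono : ∀ i j : Fin M, i ≤ j → r j ≤ r i)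
    (hr_nonneg : ∀ b, 0 ≤ r b)
    (B : Fin M → Ω → Bool)
    (hBmeas : ∀ b, Measurable (B b))
    (hBindep : iIndepFun B P)
    (hBlaw : ∀ b, P {ω | B b ω = true} = ENNReal.ofReal (l b))
    (R : Ω → ℝ)
    (hR : ∀ ω, R ω =
      if h : (Finset.univ.filter fun b => B b ω = true).Nonempty then
        r ((Finset.univ.filter fun b => B b ω = true).min' h)
      else 0) :
    (1 - 1 / Real.exp 1) * ∑ b, r b * l b ≤ ∫ ω, R ω ∂P :=
  stmt_3_general P M l r hl0 hsum hr_mono hr_nonneg B hBmeas hBindep hBlaw R hR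
end

section
/- Let (Ω, P) be a probability space, M and K positive integers, δ ∈ (0,1] and ε ∈ (0, 1/4] real numbers. For each k ∈ {1,…,K}, let X_1^{(k)}, …, X_M^{(k)} : Ω → ℝ be random variables such that for each fixed k the family (X_b^{(k)})_{b=1}^M is independent, 0 ≤ X_b^{(k)} ≤ δ almost surely for all b, k, and ∑_{b=1}^M E[X_b^{(k)}] ≤ 1 − ε for each k. Then for every real ψ ≥ 1: P(there exists k ∈ {1,…,K} with ∑_{b=1}^M X_b^{(k)} ≥ ψ(1+ε)(1−ε)) ≤ K · exp(−ψ ε² / (4δ)). -/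
/-!
Chernoff bound for each resource type, then a union bound over the `K` types. For `X ∈ [0, δ]`,
convexity of `exp` gives `E[e^{tX}] ≤ 1 + (e^{tδ} - 1)/δ · E[X] ≤ exp ((e^{tδ} - 1)/δ · E[X])`;
independence multiplies these bounds, and Markov's inequality at `t = log (1 + ε) / δ` bounds the
tail by `exp ((ε (1 - ε) - log (1 + ε) ψ (1 + ε)(1 - ε)) / δ)`, which `log (1 + ε) ≥ 2ε/(2 + ε)`
turns into `exp (-ψ ε² / (4δ))` when `ε ≤ 1/4`.
-/

open MeasureTheory ProbabilityTheory

namespace Real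

lemma exp_mul_le_one_add_mul_of_mem_Icc {c x : ℝ} (t : ℝ) (hc : 0 < c) (hx : x ∈ Set.Icc 0 c) :
    exp (t * x) ≤ 1 + (exp (t * c) - 1) / c * x := by
  have hxc : x / c ≤ 1 := (div_le_one hc).2 hx.2
  have key := convexOn_exp.2 (Set.mem_univ 0) (Set.mem_univ (t * c)) (sub_nonneg.2 hxc)
    (div_nonneg hx.1 hc.le) (sub_add_cancel 1 (x / c))
  have hcomb : (1 - x / c) • (0 : ℝ) + (x / c) • (t * c) = t * x := by
    rw [smul_zero, zero_add, smul_eq_mul]; field_simp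
  rw [hcomb, smul_eq_mul, smul_eq_mul, exp_zero] at key
  linarith [show (1 - x / c) * 1 + x / c * exp (t * c) = 1 + (exp (t * c) - 1) / c * x by ring]

lemma sub_log_one_add_mul_le {ε ψ : ℝ} (hε : 0 < ε) (hε4 : ε ≤ 1 / 4) (hψ : 1 ≤ ψ) :
    ε * (1 - ε) - log (1 + ε) * (ψ * (1 + ε) * (1 - ε)) ≤ -(ψ * ε ^ 2) / 4 := by
  have hlog := le_log_one_add_of_nonneg hε.le
  rw [div_le_iff₀ (by linarith)] at hlog
  -- after `log (1 + ε) ≥ 2ε/(ε + 2)` the claim is affine in `ψ`, with slack `ε² (1/2 - 5ε/4)` at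
  -- `ψ = 1` (after clearing `ε + 2`) and a nonnegative slope
  have hslope : 0 ≤ (ψ - 1) * (2 * ε * (1 - ε ^ 2) - ε ^ 2 * (ε + 2) / 4) :=
    mul_nonneg (by linarith) (by nlinarith)
  nlinarith [mul_le_mul_of_nonneg_left hlog (show 0 ≤ ψ * (1 - ε ^ 2) by nlinarith),
    mul_pos (sq_pos_of_pos hε) (show 0 < 1 / 2 - 5 / 4 * ε by linarith)]

end Real

namespace ProbabilityTheory

open Real

variable {Ω ι : Type*} [MeasurableSpace Ω] {μ : Measure Ω} {c : ℝ}

lemma mgf_le_exp_mul_integral_of_mem_Icc [IsProbabilityMeasure μ] {X : Ω → ℝ}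
    (hX : AEMeasurable X μ) (hc : 0 < c) (hXc : ∀ᵐ ω ∂μ, X ω ∈ Set.Icc 0 c) (t : ℝ) :
    mgf X μ t ≤ exp ((exp (t * c) - 1) / c * μ[X]) := by
  have hXint : Integrable X μ := .of_mem_Icc 0 c hX hXc
  calc mgf X μ t ≤ ∫ ω, 1 + (exp (t * c) - 1) / c * X ω ∂μ :=
        integral_mono_of_nonneg (.of_forall fun _ ↦ (exp_pos _).le)
          ((integrable_const 1).add (hXint.const_mul _))
          (hXc.mono fun ω hω ↦ exp_mul_le_one_add_mul_of_mem_Icc t hc hω)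
    _ = 1 + (exp (t * c) - 1) / c * μ[X] := by
        rw [integral_add (integrable_const 1) (hXint.const_mul _), integral_const_mul]
        simp
    _ ≤ exp ((exp (t * c) - 1) / c * μ[X]) := by
        rw [add_comm]; exact add_one_le_exp _

lemma measureReal_sum_ge_le_of_iIndepFun_of_mem_Icc [IsProbabilityMeasure μ] {X : ι → Ω → ℝ}
    (h_indep : iIndepFun X μ) (h_meas : ∀ i, Measurable (X i)) (hc : 0 < c)
    (hXc : ∀ i, ∀ᵐ ω ∂μ, X i ω ∈ Set.Icc 0 c) (s : Finset ι) (a : ℝ) {t : ℝ} (ht : 0 ≤ t) :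
    μ.real {ω | a ≤ ∑ i ∈ s, X i ω} ≤
      exp (-t * a + (exp (t * c) - 1) / c * ∑ i ∈ s, μ[X i]) := by
  have h_int := h_indep.integrable_exp_mul_sum (t := t) h_meas (s := s) fun i _ ↦
    integrable_exp_mul_of_mem_Icc (h_meas i).aemeasurable (hXc i)
  have h_chernoff := measure_ge_le_exp_mul_mgf a ht h_int
  simp only [Finset.sum_apply] at h_chernoff
  refine h_chernoff.trans ?_
  rw [h_indep.mgf_sum h_meas, exp_add, Finset.mul_sum, exp_sum]
  gcongr with i
  · exact fun i _ ↦ mgf_nonneg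
  · exact mgf_le_exp_mul_integral_of_mem_Icc (h_meas i).aemeasurable hc (hXc i) t

lemma measureReal_sum_ge_le_exp_log_one_add [IsProbabilityMeasure μ] {X : ι → Ω → ℝ}
    (h_indep : iIndepFun X μ) (h_meas : ∀ i, Measurable (X i)) (hc : 0 < c)
    (hXc : ∀ i, ∀ᵐ ω ∂μ, X i ω ∈ Set.Icc 0 c) (s : Finset ι) {m : ℝ}
    (hm : ∑ i ∈ s, μ[X i] ≤ m) (a : ℝ) {ε : ℝ} (hε : 0 ≤ ε) :
    μ.real {ω | a ≤ ∑ i ∈ s, X i ω} ≤ exp ((ε * m - log (1 + ε) * a) / c) := by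
  have hexp : exp (log (1 + ε) / c * c) = 1 + ε := by
    rw [div_mul_cancel₀ _ hc.ne', exp_log (by linarith)]
  refine (measureReal_sum_ge_le_of_iIndepFun_of_mem_Icc h_indep h_meas hc hXc s a
    (t := log (1 + ε) / c) (div_nonneg (log_nonneg (by linarith)) hc.le)).trans (exp_le_exp.2 ?_)
  rw [hexp, add_sub_cancel_left]
  calc -(log (1 + ε) / c) * a + ε / c * ∑ i ∈ s, μ[X i]
      ≤ -(log (1 + ε) / c) * a + ε / c * m := by gcongr
    _ = (ε * m - log (1 + ε) * a) / c := by ring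

end ProbabilityTheory

theorem stmt_6_general {Ω : Type*} [MeasurableSpace Ω] (P : Measure Ω) [IsProbabilityMeasure P]
    (M K : ℕ) (δ ε : ℝ)
    (hδ : 0 < δ) (hε : 0 < ε) (hε4 : ε ≤ 1 / 4)
    (X : Fin K → Fin M → Ω → ℝ)
    (hXmeas : ∀ k b, Measurable (X k b))
    (hXindep : ∀ k, iIndepFun (X k) P)
    (hXbound : ∀ k b, ∀ᵐ ω ∂P, 0 ≤ X k b ω ∧ X k b ω ≤ δ)
    (hXexp : ∀ k, ∑ b, ∫ ω, X k b ω ∂P ≤ 1 - ε) :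
    ∀ ψ : ℝ, 1 ≤ ψ →
      P {ω | ∃ k, ψ * (1 + ε) * (1 - ε) ≤ ∑ b, X k b ω} ≤
        (K : ENNReal) * ENNReal.ofReal (Real.exp (-(ψ * ε ^ 2) / (4 * δ))) := by
  intro ψ hψ
  have h_tail (k : Fin K) : P {ω | ψ * (1 + ε) * (1 - ε) ≤ ∑ b, X k b ω} ≤
      ENNReal.ofReal (Real.exp (-(ψ * ε ^ 2) / (4 * δ))) := by
    rw [← ofReal_measureReal]
    refine ENNReal.ofReal_le_ofReal <| (measureReal_sum_ge_le_exp_log_one_add (hXindep k)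
      (hXmeas k) hδ (hXbound k) _ (hXexp k) _ hε.le).trans (Real.exp_le_exp.2 ?_)
    rw [← div_div, div_le_div_iff_of_pos_right hδ]
    exact Real.sub_log_one_add_mul_le hε hε4 hψ
  calc P {ω | ∃ k, ψ * (1 + ε) * (1 - ε) ≤ ∑ b, X k b ω}
      = P (⋃ k, {ω | ψ * (1 + ε) * (1 - ε) ≤ ∑ b, X k b ω}) := by rw [Set.ofPred_exists]
    _ ≤ ∑ k, P {ω | ψ * (1 + ε) * (1 - ε) ≤ ∑ b, X k b ω} := measure_iUnion_fintype_le _ _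
    _ ≤ ∑ _k : Fin K, ENNReal.ofReal (Real.exp (-(ψ * ε ^ 2) / (4 * δ))) :=
        Finset.sum_le_sum fun k _ ↦ h_tail k
    _ = _ := by simp

theorem stmt_6 {Ω : Type*} [MeasurableSpace Ω] (P : Measure Ω) [IsProbabilityMeasure P]
    (M K : ℕ) (hM : 0 < M) (hK : 0 < K) (δ ε : ℝ)
    (hδ : 0 < δ) (hδ1 : δ ≤ 1) (hε : 0 < ε) (hε4 : ε ≤ 1 / 4)
    (X : Fin K → Fin M → Ω → ℝ)
    (hXmeas : ∀ k b, Measurable (X k b))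
    (hXindep : ∀ k, iIndepFun (X k) P)
    (hXbound : ∀ k b, ∀ᵐ ω ∂P, 0 ≤ X k b ω ∧ X k b ω ≤ δ)
    (hXexp : ∀ k, ∑ b, ∫ ω, X k b ω ∂P ≤ 1 - ε) :
    ∀ ψ : ℝ, 1 ≤ ψ →
      P {ω | ∃ k, ψ * (1 + ε) * (1 - ε) ≤ ∑ b, X k b ω} ≤
        (K : ENNReal) * ENNReal.ofReal (Real.exp (-(ψ * ε ^ 2) / (4 * δ))) :=
  stmt_6_general P M K δ ε hδ hε hε4 X hXmeas hXindep hXbound hXexp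
end

section
/- Let (Ω, P) be a probability space, W : Ω → ℝ a nonnegative integrable random variable, Γ ≥ 0 a real number, K ≥ 1 an integer, and q ≥ 4 a real number. Let (B_ψ)_{ψ ∈ ℕ} be a countable family of measurable subsets of Ω that are pairwise disjoint and whose union is Ω. Suppose that for every integer ψ ≥ 1: (i) W(ω) ≤ (ψ + 1) · Γ for almost every ω ∈ B_ψ, and (ii) P(B_ψ) ≤ K · e^{−ψ K q}. Then ∫_{B_0} W dP ≥ E[W] − (2/q) · Γ. -/
/-!
Since the `B ψ` partition `Ω`, `∫ W = ∫_{B 0} W + ∑_{ψ ≥ 1} ∫_{B ψ} W`. The block `B ψ`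
contributes at most `(ψ + 1) Γ · K e^{-ψ t} ≤ Γ K (2 e^{-t})^ψ` with `t = K q`, because
`ψ + 1 ≤ 2^ψ`. The geometric tail sums to `Γ K r / (1 - r)` with `r = 2 e^{-t}`, and
`r / (1 - r) ≤ 2 / t` as soon as `t ≥ 2`, which gives the loss `Γ K · 2 / (K q) = (2 / q) Γ`.
-/

open MeasureTheory Real

lemma add_two_le_exp {t : ℝ} (ht : 2 ≤ t) : t + 2 ≤ exp t := by
  have hsq : exp (t / 2) ^ 2 = exp t := by rw [← exp_nat_mul]; ring_nf
  have hhalf : t / 2 + 1 ≤ exp (t / 2) := add_one_le_exp _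
  nlinarith

lemma add_one_mul_exp_le_geometric (t : ℝ) (n : ℕ) :
    ((n : ℝ) + 1) * exp (-(n * t)) ≤ (2 * exp (-t)) ^ n := by
  have hpow : (n : ℝ) + 1 ≤ 2 ^ n := by exact_mod_cast Nat.lt_two_pow_self
  rw [mul_pow, ← exp_nat_mul, mul_neg]
  gcongr

lemma summable_two_mul_exp_neg_pow_succ_and_tsum_le {t : ℝ} (ht : 2 ≤ t) :
    Summable (fun n : ℕ ↦ (2 * exp (-t)) ^ (n + 1)) ∧
      ∑' n : ℕ, (2 * exp (-t)) ^ (n + 1) ≤ 2 / t := by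
  set r := 2 * exp (-t)
  have hr : 0 ≤ r := by positivity
  -- `r < 1` and `r / (1 - r) ≤ 2 / t` both amount to `t + 2 ≤ exp t`.
  have hkey : r * (t + 2) ≤ 2 := by
    have h := mul_le_mul_of_nonneg_left (add_two_le_exp ht) (exp_pos (-t)).le
    rw [← exp_add, neg_add_cancel, exp_zero] at h
    linarith
  have hr1 : r < 1 := by nlinarith
  simp_rw [pow_succ]
  refine ⟨(summable_geometric_of_lt_one hr hr1).mul_right r, ?_⟩
  rw [tsum_mul_right, tsum_geometric_of_lt_one hr hr1, inv_mul_eq_div,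
    div_le_div_iff₀ (by linarith) (by linarith)]
  linarith

lemma setIntegral_le_measureReal_mul {Ω : Type*} [MeasurableSpace Ω] {μ : Measure Ω}
    [IsFiniteMeasure μ] {s : Set Ω} {f : Ω → ℝ} {c : ℝ} (hs : MeasurableSet s)
    (hf : IntegrableOn f s μ) (hfc : ∀ᵐ ω ∂μ, ω ∈ s → f ω ≤ c) :
    ∫ ω in s, f ω ∂μ ≤ μ.real s * c :=
  calc ∫ ω in s, f ω ∂μ ≤ ∫ _ in s, c ∂μ := setIntegral_mono_on_ae hf integrableOn_const hs hfc
    _ = μ.real s * c := by rw [setIntegral_const, smul_eq_mul]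

lemma setIntegral_le_geometric {Ω : Type*} [MeasurableSpace Ω] {μ : Measure Ω}
    [IsFiniteMeasure μ] {s : Set Ω} {f : Ω → ℝ} {Γ K t : ℝ} {n : ℕ} (hs : MeasurableSet s)
    (hf : IntegrableOn f s μ) (hΓ : 0 ≤ Γ) (hK : 0 ≤ K)
    (hfs : ∀ᵐ ω ∂μ, ω ∈ s → f ω ≤ ((n : ℝ) + 1) * Γ) (hμs : μ.real s ≤ K * exp (-(n * t))) :
    ∫ ω in s, f ω ∂μ ≤ Γ * K * (2 * exp (-t)) ^ n :=
  calc ∫ ω in s, f ω ∂μ ≤ μ.real s * (((n : ℝ) + 1) * Γ) :=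
        setIntegral_le_measureReal_mul hs hf hfs
    _ ≤ K * exp (-(n * t)) * (((n : ℝ) + 1) * Γ) := by gcongr
    _ = Γ * K * (((n : ℝ) + 1) * exp (-(n * t))) := by ring
    _ ≤ Γ * K * (2 * exp (-t)) ^ n := by gcongr; exact add_one_mul_exp_le_geometric t n

theorem stmt_8_general {Ω : Type*} [MeasurableSpace Ω] (P : Measure Ω) [IsProbabilityMeasure P]
    (W : Ω → ℝ) (hW_int : Integrable W P)
    (Γ : ℝ) (hΓ : 0 ≤ Γ) (K : ℕ) (hK : 1 ≤ K) (q : ℝ) (hq : 4 ≤ q)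
    (B : ℕ → Set Ω)
    (hBmeas : ∀ ψ, MeasurableSet (B ψ))
    (hBdisj : Pairwise (Function.onFun Disjoint B))
    (hBcover : (⋃ ψ, B ψ) = Set.univ)
    (hWbound : ∀ ψ : ℕ, 1 ≤ ψ → ∀ᵐ ω ∂P, ω ∈ B ψ → W ω ≤ ((ψ : ℝ) + 1) * Γ)
    (hBprob : ∀ ψ : ℕ, 1 ≤ ψ →
      P (B ψ) ≤ ENNReal.ofReal ((K : ℝ) * Real.exp (-((ψ : ℝ) * K * q)))) :
    (∫ ω, W ω ∂P) - (2 / q) * Γ ≤ ∫ ω in B 0, W ω ∂P := by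
  have hK' : (1 : ℝ) ≤ K := by exact_mod_cast hK
  set t := (K : ℝ) * q with ht
  obtain ⟨hsummable, htsum⟩ :=
    summable_two_mul_exp_neg_pow_succ_and_tsum_le (t := t) (by nlinarith)
  have hsplit : HasSum (fun ψ ↦ ∫ ω in B ψ, W ω ∂P) (∫ ω, W ω ∂P) := by
    simpa [hBcover] using hasSum_integral_iUnion hBmeas hBdisj hW_int.integrableOn
  have hP (ψ : ℕ) (hψ : 1 ≤ ψ) : P.real (B ψ) ≤ K * exp (-(ψ * t)) := by
    rw [ht, ← mul_assoc]
    exact ENNReal.toReal_le_of_le_ofReal (by positivity) (hBprob ψ hψ)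
  have hblock (n : ℕ) : ∫ ω in B (n + 1), W ω ∂P ≤ Γ * K * (2 * exp (-t)) ^ (n + 1) :=
    setIntegral_le_geometric (hBmeas _) hW_int.integrableOn hΓ (by positivity)
      (hWbound _ n.succ_pos) (hP _ n.succ_pos)
  have htail : ∑' n : ℕ, ∫ ω in B (n + 1), W ω ∂P ≤ 2 / q * Γ :=
    calc ∑' n : ℕ, ∫ ω in B (n + 1), W ω ∂P ≤ ∑' n : ℕ, Γ * K * (2 * exp (-t)) ^ (n + 1) :=
          ((summable_nat_add_iff 1).mpr hsplit.summable).tsum_le_tsum hblock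
            (hsummable.mul_left _)
      _ ≤ Γ * K * (2 / t) := by rw [tsum_mul_left]; gcongr
      _ = 2 / q * Γ := by rw [ht]; field_simp
  rw [← hsplit.tsum_eq, hsplit.summable.tsum_eq_zero_add]
  linarith

theorem stmt_8 {Ω : Type*} [MeasurableSpace Ω] (P : Measure Ω) [IsProbabilityMeasure P]
    (W : Ω → ℝ) (hW_nonneg : ∀ ω, 0 ≤ W ω) (hW_int : Integrable W P)
    (Γ : ℝ) (hΓ : 0 ≤ Γ) (K : ℕ) (hK : 1 ≤ K) (q : ℝ) (hq : 4 ≤ q)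
    (B : ℕ → Set Ω)
    (hBmeas : ∀ ψ, MeasurableSet (B ψ))
    (hBdisj : Pairwise (Function.onFun Disjoint B))
    (hBcover : (⋃ ψ, B ψ) = Set.univ)
    (hWbound : ∀ ψ : ℕ, 1 ≤ ψ → ∀ᵐ ω ∂P, ω ∈ B ψ → W ω ≤ ((ψ : ℝ) + 1) * Γ)
    (hBprob : ∀ ψ : ℕ, 1 ≤ ψ →
      P (B ψ) ≤ ENNReal.ofReal ((K : ℝ) * Real.exp (-((ψ : ℝ) * K * q)))) :
    (∫ ω, W ω ∂P) - (2 / q) * Γ ≤ ∫ ω in B 0, W ω ∂P :=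
  stmt_8_general P W hW_int Γ hΓ K hK q hq B hBmeas hBdisj hBcover hWbound hBprob
end

section
/- Let M, L, K be positive integers with corresponding index sets [M], [L], [K], let δ be a real number with 0 < δ ≤ 1/2, and let c_{b,l}^{(k)} ∈ [0,1] be real numbers for b ∈ [M], l ∈ [L], k ∈ [K]. Let 𝒜 be the set of all partial functions σ assigning to each b ∈ [M] at most one line σ(b) ∈ [L], such that (i) for every b in the domain of σ and every k ∈ [K], there exists some k' ∈ [K] with c_{b,σ(b)}^{(k')} > δ, and (ii) for every k ∈ [K], the sum of c_{b,σ(b)}^{(k)} over all b in the domain of σ is at most 1. Then the cardinality of 𝒜 satisfies |𝒜| ≤ (K/δ) · (M·L)^{K/δ}, where the exponent K/δ is a real exponent. -/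
/-!
A feasible assignment is recorded by its graph, a set of bus–line pairs. Every pair in the graph
carries a resource cost above `δ`, while the total cost over all `K` resources is at most `K`;
hence the graph has at most `K / δ` elements. There are at most `2 (ML)^⌊K/δ⌋` such sets of
pairs (a geometric sum when `ML ≥ 2`, trivial when `ML = 1`), and `2 ≤ K / δ` absorbs the
factor `2`.
-/

open Finset

section OptionGraph

variable {α β : Type*} [Fintype α] [Fintype β] [DecidableEq β]

def optionGraph (σ : α → Option β) : Finset (α × β) :=
  {p | σ p.1 = some p.2}

@[simp]
lemma mem_optionGraph {σ : α → Option β} {p : α × β} : p ∈ optionGraph σ ↔ σ p.1 = some p.2 := by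
  simp [optionGraph]

lemma optionGraph_injective : Function.Injective (optionGraph : (α → Option β) → _) := by
  intro σ τ h
  funext a
  exact Option.ext fun b => by simpa using congrArg ((a, b) ∈ ·) h

lemma sum_optionGraph {R : Type*} [AddCommMonoid R] (σ : α → Option β) (f : α → β → R) :
    ∑ p ∈ optionGraph σ, f p.1 p.2 = ∑ a, (σ a).elim 0 (f a) := by
  rw [optionGraph, sum_filter, Fintype.sum_prod_type]
  refine sum_congr rfl fun a _ => ?_
  cases h : σ a <;> simp [h]

lemma mul_card_optionGraph_le {κ : Type*} [Fintype κ] {δ : ℝ} (c : α → β → κ → ℝ)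
    (hc : ∀ a b k, 0 ≤ c a b k) (σ : α → Option β)
    (hhigh : ∀ a b, σ a = some b → ∃ k, δ < c a b k)
    (hbudget : ∀ k, ∑ a, (σ a).elim 0 (fun b => c a b k) ≤ 1) :
    δ * #(optionGraph σ) ≤ Fintype.card κ := by
  have hcost : ∀ p ∈ optionGraph σ, δ ≤ ∑ k, c p.1 p.2 k := by
    intro p hp
    obtain ⟨k, hk⟩ := hhigh p.1 p.2 (mem_optionGraph.1 hp)
    exact hk.le.trans (single_le_sum (fun k _ => hc p.1 p.2 k) (mem_univ k))
  calc δ * #(optionGraph σ) = ∑ _p ∈ optionGraph σ, δ := by simp [mul_comm]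
    _ ≤ ∑ p ∈ optionGraph σ, ∑ k, c p.1 p.2 k := sum_le_sum hcost
    _ = ∑ k, ∑ a, (σ a).elim 0 (fun b => c a b k) := by
        rw [sum_comm]
        exact sum_congr rfl fun k _ => sum_optionGraph σ fun a b => c a b k
    _ ≤ ∑ _k : κ, (1 : ℝ) := sum_le_sum fun k _ => hbudget k
    _ = Fintype.card κ := by simp

end OptionGraph

lemma card_filter_card_le_le_sum_pow {α : Type*} [Fintype α] [DecidableEq α] (s : ℕ) :
    #{A : Finset α | #A ≤ s} ≤ ∑ j ∈ range (s + 1), Fintype.card α ^ j := by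
  calc #{A : Finset α | #A ≤ s}
      ≤ #((range (s + 1)).biUnion fun j => powersetCard j (univ : Finset α)) := by
        refine card_le_card fun A hA => ?_
        simp only [mem_filter, mem_univ, true_and] at hA
        simpa [mem_biUnion, mem_powersetCard, Nat.lt_succ_iff] using hA
    _ ≤ ∑ j ∈ range (s + 1), #(powersetCard j (univ : Finset α)) := card_biUnion_le
    _ ≤ ∑ j ∈ range (s + 1), Fintype.card α ^ j := by
        refine sum_le_sum fun j _ => ?_
        rw [card_powersetCard, card_univ]
        exact Nat.choose_le_pow _ _

lemma card_filter_card_le_le_two_mul_pow {α : Type*} [Fintype α] [DecidableEq α]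
    (hα : 1 ≤ Fintype.card α) (s : ℕ) :
    #{A : Finset α | #A ≤ s} ≤ 2 * Fintype.card α ^ s := by
  rcases hα.eq_or_lt with hone | htwo
  · calc #{A : Finset α | #A ≤ s} ≤ Fintype.card (Finset α) := card_le_univ _
      _ = 2 * Fintype.card α ^ s := by simp [← hone]
  · have hgeom := Nat.geomSum_lt htwo (s := range s) (n := s) fun k hk => mem_range.1 hk
    calc #{A : Finset α | #A ≤ s} ≤ ∑ j ∈ range (s + 1), Fintype.card α ^ j :=
          card_filter_card_le_le_sum_pow s
      _ ≤ 2 * Fintype.card α ^ s := by rw [sum_range_succ]; omega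

lemma two_mul_pow_floor_le_mul_rpow {x t : ℝ} (hx : 1 ≤ x) (ht : 2 ≤ t) :
    2 * x ^ ⌊t⌋₊ ≤ t * x ^ t := by
  have hpow : x ^ ⌊t⌋₊ ≤ x ^ t := by
    rw [← Real.rpow_natCast]
    exact Real.rpow_le_rpow_of_exponent_le hx (Nat.floor_le (by linarith))
  gcongr

theorem stmt_14 (M L K : ℕ) (hM : 0 < M) (hL : 0 < L) (hK : 0 < K)
    (δ : ℝ) (hδ0 : 0 < δ) (hδ : δ ≤ 1 / 2)
    (c : Fin M → Fin L → Fin K → ℝ)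
    (hc : ∀ b l k, 0 ≤ c b l k ∧ c b l k ≤ 1)
    (𝒜 : Set (Fin M → Option (Fin L)))
    (h𝒜 : 𝒜 = {σ | (∀ b l, σ b = some l → ∃ k, δ < c b l k) ∧
      (∀ k, (∑ b, (Option.elim (σ b) 0 fun l => c b l k)) ≤ 1)}) :
    (𝒜.ncard : ℝ) ≤ (K / δ) * ((M : ℝ) * L) ^ ((K : ℝ) / δ) := by
  have ht : 2 ≤ (K : ℝ) / δ := by
    rw [le_div_iff₀ hδ0]
    have : (1 : ℝ) ≤ K := by exact_mod_cast hK
    linarith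
  have hsmall : ∀ σ ∈ 𝒜, #(optionGraph σ) ≤ ⌊(K : ℝ) / δ⌋₊ := by
    intro σ hσ
    obtain ⟨hhigh, hbudget⟩ := h𝒜 ▸ hσ
    have := mul_card_optionGraph_le c (fun b l k => (hc b l k).1) σ hhigh hbudget
    exact Nat.le_floor <| (le_div_iff₀ hδ0).2 <| by simpa [mul_comm] using this
  have hcount : 𝒜.ncard ≤ #{A : Finset (Fin M × Fin L) | #A ≤ ⌊(K : ℝ) / δ⌋₊} := by
    simpa using Set.ncard_le_ncard_of_injOn optionGraph (by simpa using hsmall)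
      optionGraph_injective.injOn (finite_toSet _)
  have hcard : Fintype.card (Fin M × Fin L) = M * L := by simp
  have hpos : 1 ≤ M * L := Nat.mul_pos hM hL
  calc (𝒜.ncard : ℝ) ≤ 2 * ((M : ℝ) * L) ^ ⌊(K : ℝ) / δ⌋₊ := by
        have := hcount.trans (card_filter_card_le_le_two_mul_pow (hcard ▸ hpos) _)
        rw [hcard] at this
        exact_mod_cast this
    _ ≤ (K / δ) * ((M : ℝ) * L) ^ ((K : ℝ) / δ) :=
        two_mul_pow_floor_le_mul_rpow (by exact_mod_cast hpos) ht
end
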